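/- arXiv:2507.08280 — 2 statements merged into one kernel-verified Lean document; each statement's English description precedes it below -/
import Mathlib

section
/- Let U and V be discrete random variables on finite sets, and let ξ be a deterministic function on the range of U. If there exists ε > 0 such that for every u in the support of U, the KL divergence D_KL(P(V | U = u) ‖ P(V | ξ(U) = ξ(u))) < ε, then |I(U; V) − I(ξ(U); V)| < ε. -/
open Real

/-- Marginal distribution of the first variable of a joint pmf. -/
noncomputable def margU {U V : Type*} [Fintype V] (p : U → V → ℝ) (u : U) : ℝ := ∑ v, p u v

/-- Marginal distribution of the second variable of a joint pmf. -/
noncomputable def margV {U V : Type*} [Fintype U] (p : U → V → ℝ) (v : V) : ℝ := ∑ u, p u v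

/-- Conditional distribution of the second variable given the first: P(V = v | U = u). -/
noncomputable def condP {U V : Type*} [Fintype V] (p : U → V → ℝ) (u : U) (v : V) : ℝ :=
  p u v / margU p u

/-- Shannon entropy of a distribution. -/
noncomputable def entropy {V : Type*} [Fintype V] (q : V → ℝ) : ℝ :=
  -∑ v, q v * Real.log (q v)

/-- Conditional Shannon entropy H(V | U) of a joint pmf. -/
noncomputable def condEnt {U V : Type*} [Fintype U] [Fintype V] (p : U → V → ℝ) : ℝ :=
  -∑ u, ∑ v, p u v * Real.log (condP p u v)

/-- Mutual information I(U; V) = H(V) - H(V | U). -/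
noncomputable def MI {U V : Type*} [Fintype U] [Fintype V] (p : U → V → ℝ) : ℝ :=
  entropy (margV p) - condEnt p

/-- Kullback–Leibler divergence between two distributions on a finite set. -/
noncomputable def KL {V : Type*} [Fintype V] (P Q : V → ℝ) : ℝ :=
  ∑ v, P v * Real.log (P v / Q v)

/-- Joint pmf of (ξ(U), V), i.e. the pushforward of the first coordinate by ξ. -/
noncomputable def push {U V W : Type*} [Fintype U] [DecidableEq W]
    (ξ : U → W) (p : U → V → ℝ) : W → V → ℝ :=
  fun w v => ∑ u, if ξ u = w then p u v else 0

/-- `p` is a probability mass function on `U × V`. -/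
def IsJoint {U V : Type*} [Fintype U] [Fintype V] (p : U → V → ℝ) : Prop :=
  (∀ u v, 0 ≤ p u v) ∧ ∑ u, ∑ v, p u v = 1



set_option linter.unusedSectionVars false
section Aux
variable {U V W : Type*} [Fintype U] [Fintype V] [Fintype W] [DecidableEq W]

lemma step_lemma (ξ : U → W) (p : U → V → ℝ) (L : W → V → ℝ) :
    ∑ w, ∑ v, push ξ p w v * L w v = ∑ u, ∑ v, p u v * L (ξ u) v := by
  simp only [push, Finset.sum_mul, ite_mul, zero_mul]
  have h1 : ∀ w : W, ∑ v, ∑ u, (if ξ u = w then p u v * L w v else 0)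
      = ∑ u, ∑ v, (if ξ u = w then p u v * L w v else 0) := fun w => Finset.sum_comm ..
  simp_rw [h1]
  rw [Finset.sum_comm]
  refine Finset.sum_congr rfl fun u _ => ?_
  rw [Finset.sum_comm]
  refine Finset.sum_congr rfl fun v _ => ?_
  simp [Finset.sum_ite_eq]

lemma margV_push (ξ : U → W) (p : U → V → ℝ) (v : V) :
    margV (push ξ p) v = margV p v := by
  simp only [margV, push]
  rw [Finset.sum_comm]
  refine Finset.sum_congr rfl fun u _ => ?_
  simp [Finset.sum_ite_eq]

lemma push_ge (ξ : U → W) (p : U → V → ℝ) (hnn : ∀ u v, 0 ≤ p u v) (u : U) (v : V) :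
    p u v ≤ push ξ p (ξ u) v := by
  have := Finset.single_le_sum (f := fun u' => if ξ u' = ξ u then p u' v else 0)
    (fun i _ => by split <;> simp [hnn]) (Finset.mem_univ u)
  simpa [push] using this

lemma margU_push_ge (ξ : U → W) (p : U → V → ℝ) (hnn : ∀ u v, 0 ≤ p u v) (u : U) :
    margU p u ≤ margU (push ξ p) (ξ u) :=
  Finset.sum_le_sum fun v _ => push_ge ξ p hnn u v

end Aux

section Aux2
set_option linter.unusedSectionVars false
variable {U V W : Type*} [Fintype U] [Fintype V] [Fintype W] [DecidableEq W]

lemma margU_nonneg' (p : U → V → ℝ) (hnn : ∀ u v, 0 ≤ p u v) (u : U) : 0 ≤ margU p u :=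
  Finset.sum_nonneg fun v _ => hnn u v

lemma p_le_margU (p : U → V → ℝ) (hnn : ∀ u v, 0 ≤ p u v) (u : U) (v : V) :
    p u v ≤ margU p u :=
  Finset.single_le_sum (fun i _ => hnn u i) (Finset.mem_univ v)

lemma p_zero_of_margU (p : U → V → ℝ) (hnn : ∀ u v, 0 ≤ p u v) {u : U}
    (hm : margU p u = 0) (v : V) : p u v = 0 :=
  le_antisymm (hm ▸ p_le_margU p hnn u v) (hnn u v)

lemma key_pt (p : U → V → ℝ) (hnn : ∀ u v, 0 ≤ p u v) (ξ : U → W) (u : U) (v : V) :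
    p u v * Real.log (condP p u v / condP (push ξ p) (ξ u) v)
      = p u v * Real.log (condP p u v) - p u v * Real.log (condP (push ξ p) (ξ u) v) := by
  rcases eq_or_lt_of_le (hnn u v) with h0 | hpos
  · simp [← h0]
  · have hm : 0 < margU p u := lt_of_lt_of_le hpos (p_le_margU p hnn u v)
    have hA : 0 < condP p u v := div_pos hpos hm
    have hB : 0 < condP (push ξ p) (ξ u) v := by
      have h1 : 0 < push ξ p (ξ u) v := lt_of_lt_of_le hpos (push_ge ξ p hnn u v)
      have h2 : 0 < margU (push ξ p) (ξ u) := lt_of_lt_of_le hm (margU_push_ge ξ p hnn u)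
      exact div_pos h1 h2
    rw [Real.log_div hA.ne' hB.ne', mul_sub]

lemma condP_sum_one (p : U → V → ℝ) (u : U) (hm : 0 < margU p u) :
    ∑ v, condP p u v = 1 := by
  simp only [condP, ← Finset.sum_div]
  rw [margU] at hm ⊢
  exact div_self hm.ne'

lemma gibbs (p : U → V → ℝ) (hnn : ∀ u v, 0 ≤ p u v) (ξ : U → W) (u : U)
    (hm : 0 < margU p u) : 0 ≤ KL (condP p u) (condP (push ξ p) (ξ u)) := by
  have hm2 : 0 < margU (push ξ p) (ξ u) := lt_of_lt_of_le hm (margU_push_ge ξ p hnn u)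
  have key : ∀ v, condP p u v - condP (push ξ p) (ξ u) v
      ≤ condP p u v * Real.log (condP p u v / condP (push ξ p) (ξ u) v) := by
    intro v
    set P := condP p u v with hP
    set Q := condP (push ξ p) (ξ u) v with hQ
    have hQ0 : 0 ≤ Q := div_nonneg (Finset.sum_nonneg fun i _ => by split <;> simp [hnn]) hm2.le
    rcases eq_or_lt_of_le (hnn u v) with h0 | hpos
    · have : P = 0 := by simp [hP, condP, ← h0]
      rw [this]; simpa using hQ0
    · have hPpos : 0 < P := div_pos hpos hm
      have hQpos : 0 < Q := by
        have h1 : 0 < push ξ p (ξ u) v := lt_of_lt_of_le hpos (push_ge ξ p hnn u v)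
        exact div_pos h1 hm2
      have hlog := Real.log_le_sub_one_of_pos (div_pos hQpos hPpos)
      have hinv : Real.log (P / Q) = -Real.log (Q / P) := by
        rw [Real.log_div hPpos.ne' hQpos.ne', Real.log_div hQpos.ne' hPpos.ne']; ring
      rw [hinv]
      have := mul_le_mul_of_nonneg_left hlog hPpos.le
      have hd : P * (Q / P - 1) = Q - P := by field_simp
      nlinarith [this]
  have hsum := Finset.sum_le_sum (fun v (_ : v ∈ Finset.univ) => key v)
  rw [Finset.sum_sub_distrib, condP_sum_one p u hm, condP_sum_one (push ξ p) (ξ u) hm2] at hsum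
  simpa [KL] using hsum

end Aux2

section Main
set_option linter.unusedSectionVars false
variable {U V W : Type*} [Fintype U] [Fintype V] [Fintype W] [DecidableEq W]

lemma MI_diff (p : U → V → ℝ) (hnn : ∀ u v, 0 ≤ p u v) (ξ : U → W) :
    MI p - MI (push ξ p) = ∑ u, margU p u * KL (condP p u) (condP (push ξ p) (ξ u)) := by
  have hH : entropy (margV p) = entropy (margV (push ξ p)) := by
    unfold entropy
    congr 1
    exact Finset.sum_congr rfl fun v _ => by rw [margV_push]
  have h1 : MI p - MI (push ξ p) = condEnt (push ξ p) - condEnt p := by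
    unfold MI; rw [hH]; ring
  have h2 : condEnt (push ξ p)
      = -∑ u, ∑ v, p u v * Real.log (condP (push ξ p) (ξ u) v) := by
    unfold condEnt
    congr 1
    exact step_lemma ξ p (fun w v => Real.log (condP (push ξ p) w v))
  rw [h1, h2]
  unfold condEnt
  rw [neg_sub_neg, ← Finset.sum_sub_distrib]
  refine Finset.sum_congr rfl fun u _ => ?_
  rw [← Finset.sum_sub_distrib]
  have h3 : ∑ v, (p u v * Real.log (condP p u v) - p u v * Real.log (condP (push ξ p) (ξ u) v))
      = ∑ v, p u v * Real.log (condP p u v / condP (push ξ p) (ξ u) v) :=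
    Finset.sum_congr rfl fun v _ => (key_pt p hnn ξ u v).symm
  rw [h3]
  rcases eq_or_lt_of_le (margU_nonneg' p hnn u) with hm0 | hm
  · rw [← hm0, zero_mul]
    exact Finset.sum_eq_zero fun v _ => by rw [p_zero_of_margU p hnn hm0.symm v, zero_mul]
  · rw [KL, Finset.mul_sum]
    refine Finset.sum_congr rfl fun v _ => ?_
    rw [← mul_assoc, condP, mul_div_cancel₀ _ hm.ne']

end Main

/-- MI robustness proposition: if the conditional laws of V given U = u and given
ξ(U) = ξ(u) are ε-close in KL divergence for every u in the support of U, then the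
mutual informations differ by less than ε. -/
theorem stmt_0 {U V W : Type*} [Fintype U] [Fintype V] [Fintype W] [DecidableEq W]
    (p : U → V → ℝ) (hp : IsJoint p) (ξ : U → W) (ε : ℝ) (hε : 0 < ε)
    (h : ∀ u, 0 < margU p u → KL (condP p u) (condP (push ξ p) (ξ u)) < ε) :
    |MI p - MI (push ξ p)| < ε := by
  obtain ⟨hnn, hsum⟩ := hp
  rw [MI_diff p hnn ξ]
  set S : Finset U := Finset.univ.filter (fun u => 0 < margU p u) with hS
  have hzero : ∀ u ∈ Finset.univ, u ∉ S →
      margU p u * KL (condP p u) (condP (push ξ p) (ξ u)) = 0 := by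
    intro u _ hu
    have : ¬ 0 < margU p u := by simpa [hS] using hu
    have : margU p u = 0 := le_antisymm (not_lt.1 this) (margU_nonneg' p hnn u)
    rw [this, zero_mul]
  have hrw : ∑ u, margU p u * KL (condP p u) (condP (push ξ p) (ξ u))
      = ∑ u ∈ S, margU p u * KL (condP p u) (condP (push ξ p) (ξ u)) :=
    (Finset.sum_subset (Finset.filter_subset _ _) hzero).symm
  have hmsum : ∑ u, margU p u = 1 := by
    rw [← hsum]; exact Finset.sum_congr rfl fun u _ => rfl
  have hSsum : ∑ u ∈ S, margU p u = 1 := by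
    rw [← hmsum]
    refine Finset.sum_subset (Finset.filter_subset _ _) ?_
    intro u _ hu
    have : ¬ 0 < margU p u := by simpa [hS] using hu
    exact le_antisymm (not_lt.1 this) (margU_nonneg' p hnn u)
  have hne : S.Nonempty := by
    rcases Finset.eq_empty_or_nonempty S with he | hne
    · rw [he] at hSsum; simp at hSsum
    · exact hne
  have hnonneg : 0 ≤ ∑ u ∈ S, margU p u * KL (condP p u) (condP (push ξ p) (ξ u)) := by
    refine Finset.sum_nonneg fun u hu => ?_
    have hm : 0 < margU p u := (Finset.mem_filter.1 hu).2
    exact mul_nonneg hm.le (gibbs p hnn ξ u hm)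
  have hlt : ∑ u ∈ S, margU p u * KL (condP p u) (condP (push ξ p) (ξ u)) < ε := by
    calc ∑ u ∈ S, margU p u * KL (condP p u) (condP (push ξ p) (ξ u))
        < ∑ u ∈ S, margU p u * ε := by
          refine Finset.sum_lt_sum_of_nonempty hne fun u hu => ?_
          have hm : 0 < margU p u := (Finset.mem_filter.1 hu).2
          exact (mul_lt_mul_iff_right₀ hm).2 (h u hm)
      _ = ε := by rw [← Finset.sum_mul, hSsum, one_mul]
  rw [hrw, abs_of_nonneg hnonneg]
  exact hlt
end

section
/- Let U, V be discrete random variables and ξ a deterministic function of U. Suppose there exists ε > 0 with D_KL(P(V|U=u) ‖ P(V|ξ(U)=ξ(u))) < ε for all u in the support of U. Then 0 ≤ I(U;V) − I(ξ(U);V) < ε; that is, the loss of mutual information due to processing by ξ is nonnegative and bounded above by ε. -/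
open Real

lemma KL_nonneg' {V : Type*} [Fintype V] (P Q : V → ℝ) (hP : ∀ v, 0 ≤ P v)
    (hQ : ∀ v, 0 ≤ Q v) (hac : ∀ v, Q v = 0 → P v = 0)
    (hsum : ∑ v, Q v ≤ ∑ v, P v) : 0 ≤ KL P Q := by
  have key : ∀ v, P v - Q v ≤ P v * Real.log (P v / Q v) := by
    intro v
    rcases eq_or_lt_of_le (hP v) with h0 | h0
    · simp [← h0]; exact hQ v
    · have hQv : 0 < Q v := by
        rcases eq_or_lt_of_le (hQ v) with hq | hq
        · exact absurd (hac v hq.symm) (by linarith)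
        · exact hq
      have hlog : Real.log (Q v / P v) ≤ Q v / P v - 1 :=
        Real.log_le_sub_one_of_pos (by positivity)
      have heq : Real.log (P v / Q v) = - Real.log (Q v / P v) := by
        rw [← Real.log_inv]; congr 1; field_simp
      have h2 := mul_le_mul_of_nonneg_left hlog h0.le
      rw [heq]
      have h3 : P v * (Q v / P v - 1) = Q v - P v := by field_simp
      nlinarith
  have : ∑ v, (P v - Q v) ≤ ∑ v, P v * Real.log (P v / Q v) :=
    Finset.sum_le_sum fun v _ => key v
  rw [Finset.sum_sub_distrib] at this
  unfold KL; linarith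

/-- The loss of mutual information due to deterministic processing by ξ is
nonnegative and, under the pointwise ε-bound on the conditional KL divergences,
strictly smaller than ε. -/
theorem stmt_7 {U V W : Type*} [Fintype U] [Fintype V] [Fintype W] [DecidableEq W]
    (p : U → V → ℝ) (hp : IsJoint p) (ξ : U → W) (ε : ℝ) (hε : 0 < ε)
    (h : ∀ u, 0 < margU p u → KL (condP p u) (condP (push ξ p) (ξ u)) < ε) :
    0 ≤ MI p - MI (push ξ p) ∧ MI p - MI (push ξ p) < ε := by
  obtain ⟨hpos, hsum1⟩ := hp
  set q := push ξ p with hq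
  -- basic facts about q
  have hq_nonneg : ∀ w v, 0 ≤ q w v := by
    intro w v
    apply Finset.sum_nonneg
    intro u _
    split <;> [exact hpos u v; exact le_rfl]
  have hle_push : ∀ u v, p u v ≤ q (ξ u) v := by
    intro u v
    have := Finset.single_le_sum (f := fun u' => if ξ u' = ξ u then p u' v else 0)
      (fun u' _ => by by_cases hh : ξ u' = ξ u <;> simp [hh, hpos u' v]) (Finset.mem_univ u)
    have h2 : p u v ≤ ∑ x, if ξ x = ξ u then p x v else 0 := by simpa using this
    exact h2
  have hmargU_nonneg : ∀ u, 0 ≤ margU p u :=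
    fun u => Finset.sum_nonneg fun v _ => hpos u v
  have hmargU_le : ∀ u, margU p u ≤ margU q (ξ u) :=
    fun u => Finset.sum_le_sum fun v _ => hle_push u v
  have hp_zero : ∀ u, margU p u = 0 → ∀ v, p u v = 0 := by
    intro u hu v
    have := (Finset.sum_eq_zero_iff_of_nonneg (fun v _ => hpos u v)).mp hu
    exact this v (Finset.mem_univ v)
  -- margV q = margV p
  have hmargV : margV q = margV p := by
    funext v
    show ∑ w, q w v = ∑ u, p u v
    calc ∑ w, q w v = ∑ w, ∑ u, if ξ u = w then p u v else 0 := rfl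
      _ = ∑ u, ∑ w, if ξ u = w then p u v else 0 := Finset.sum_comm
      _ = ∑ u, p u v := by simp
  -- condEnt q rewritten as a sum over u
  have hA : ∑ w, ∑ v, q w v * Real.log (condP q w v)
      = ∑ u, ∑ v, p u v * Real.log (condP q (ξ u) v) := by
    have : ∀ w v, q w v * Real.log (condP q w v)
        = ∑ u, if ξ u = w then p u v * Real.log (condP q w v) else 0 := by
      intro w v
      rw [show q w v = ∑ u, if ξ u = w then p u v else 0 from rfl, Finset.sum_mul]
      apply Finset.sum_congr rfl
      intro u _
      split <;> simp
    calc ∑ w, ∑ v, q w v * Real.log (condP q w v)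
        = ∑ w, ∑ v, ∑ u, if ξ u = w then p u v * Real.log (condP q w v) else 0 := by
          apply Finset.sum_congr rfl; intro w _; apply Finset.sum_congr rfl; intro v _
          exact this w v
      _ = ∑ w, ∑ u, ∑ v, if ξ u = w then p u v * Real.log (condP q w v) else 0 :=
          Finset.sum_congr rfl fun w _ => Finset.sum_comm
      _ = ∑ u, ∑ w, ∑ v, if ξ u = w then p u v * Real.log (condP q w v) else 0 :=
          Finset.sum_comm
      _ = ∑ u, ∑ v, ∑ w, if ξ u = w then p u v * Real.log (condP q w v) else 0 :=
          Finset.sum_congr rfl fun u _ => Finset.sum_comm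
      _ = ∑ u, ∑ v, p u v * Real.log (condP q (ξ u) v) := by
          apply Finset.sum_congr rfl; intro u _; apply Finset.sum_congr rfl; intro v _
          simp
  -- the key identity
  have hkey : MI p - MI q = ∑ u, margU p u * KL (condP p u) (condP q (ξ u)) := by
    have : MI p - MI q = ∑ u, ∑ v, p u v * Real.log (condP p u v)
        - ∑ u, ∑ v, p u v * Real.log (condP q (ξ u) v) := by
      unfold MI condEnt
      rw [hmargV, hA]
      ring
    rw [this, ← Finset.sum_sub_distrib]
    apply Finset.sum_congr rfl
    intro u _
    rcases eq_or_lt_of_le (hmargU_nonneg u) with h0 | h0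
    · have hz := hp_zero u h0.symm
      have h0' : margU p u = 0 := h0.symm
      simp [hz, h0']
    · rw [KL, Finset.mul_sum, ← Finset.sum_sub_distrib]
      apply Finset.sum_congr rfl
      intro v _
      rcases eq_or_lt_of_le (hpos u v) with hv0 | hv0
      · simp [condP, ← hv0]
      · have hqpos : 0 < q (ξ u) v := lt_of_lt_of_le hv0 (hle_push u v)
        have hmq : 0 < margU q (ξ u) := lt_of_lt_of_le h0 (hmargU_le u)
        have hc1 : condP p u v = p u v / margU p u := rfl
        have hc1pos : 0 < condP p u v := by rw [hc1]; positivity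
        have hc2pos : 0 < condP q (ξ u) v := by
          show 0 < q (ξ u) v / margU q (ξ u); positivity
        rw [Real.log_div hc1pos.ne' hc2pos.ne']
        have hm : margU p u * condP p u v = p u v := by
          rw [hc1]; field_simp
        rw [← mul_assoc, hm]; ring
  rw [hkey]
  -- nonnegativity of each term
  have hterm_nonneg : ∀ u, 0 ≤ margU p u * KL (condP p u) (condP q (ξ u)) := by
    intro u
    rcases eq_or_lt_of_le (hmargU_nonneg u) with h0 | h0
    · rw [← h0]; simp
    · apply mul_nonneg (hmargU_nonneg u)
      have hmq : 0 < margU q (ξ u) := lt_of_lt_of_le h0 (hmargU_le u)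
      apply KL_nonneg'
      · intro v; exact div_nonneg (hpos u v) (hmargU_nonneg u)
      · intro v; exact div_nonneg (hq_nonneg (ξ u) v) hmq.le
      · intro v hv
        have : q (ξ u) v = 0 := by
          rcases div_eq_zero_iff.mp hv with h' | h'
          · exact h'
          · exact absurd h' hmq.ne'
        have hpz : p u v = 0 := le_antisymm (this ▸ hle_push u v) (hpos u v)
        simp [condP, hpz]
      · have e1 : ∑ v, condP q (ξ u) v = 1 := by
          unfold condP
          rw [← Finset.sum_div]
          exact div_self hmq.ne'
        have e2 : ∑ v, condP p u v = 1 := by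
          unfold condP
          rw [← Finset.sum_div]
          exact div_self h0.ne'
        rw [e1, e2]
  constructor
  · exact Finset.sum_nonneg fun u _ => hterm_nonneg u
  -- strict upper bound
  · have hmarg_sum : ∑ u, margU p u = 1 := hsum1
    have hexists : ∃ u, 0 < margU p u := by
      by_contra hc
      push_neg at hc
      have : ∑ u, margU p u = 0 :=
        Finset.sum_eq_zero fun u _ => le_antisymm (hc u) (hmargU_nonneg u)
      rw [hmarg_sum] at this
      norm_num at this
    obtain ⟨u0, hu0⟩ := hexists
    have hlt : ∑ u, margU p u * KL (condP p u) (condP q (ξ u)) < ∑ u, margU p u * ε := by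
      apply Finset.sum_lt_sum
      · intro u _
        rcases eq_or_lt_of_le (hmargU_nonneg u) with h0 | h0
        · rw [← h0]; simp
        · exact mul_le_mul_of_nonneg_left (h u h0).le h0.le
      · exact ⟨u0, Finset.mem_univ u0, (mul_lt_mul_iff_right₀ hu0).mpr (h u0 hu0)⟩
    calc ∑ u, margU p u * KL (condP p u) (condP q (ξ u)) < ∑ u, margU p u * ε := hlt
      _ = (∑ u, margU p u) * ε := by rw [Finset.sum_mul]
      _ = ε := by rw [hmarg_sum, one_mul]
end
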